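/- (The PEPS map is a coisometry whose support is the complement of |η₁⟩.) The map P satisfies P · Pᴴ = 1₃ (the 3×3 identity) and Pᴴ · P = 1₄ − |η₁⟩⟨η₁| (the orthogonal projection of ℂ²⊗ℂ² onto the orthogonal complement of the Bell vector η₁). In particular P annihilates η₁ and, after the filtering operation I − |η₁⟩⟨η₁|, the PEPS operation can be applied deterministically. -/
import Mathlib


open Matrix Complex
open scoped ComplexConjugate

noncomputable section

/-- Pauli matrix `X` -/
def X : Matrix (Fin 2) (Fin 2) ℂ := !![0, 1; 1, 0]

/-- Pauli matrix `Z` -/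
def Z : Matrix (Fin 2) (Fin 2) ℂ := !![1, 0; 0, -1]

/-- the AKLT tensors `A[1] = X`, `A[2] = X·Z`, `A[3] = Z` (indexed by `Fin 3`) -/
def A : Fin 3 → Matrix (Fin 2) (Fin 2) ℂ := ![X, X * Z, Z]

/-- the PEPS map `P l (i,j) = (1/√2)·(A l) i j` -/
def P : Matrix (Fin 3) (Fin 2 × Fin 2) ℂ :=
  Matrix.of fun l p => (1 / (Real.sqrt 2 : ℂ)) * A l p.1 p.2

/-- Bell state `η₁ = (|00⟩+|11⟩)/√2` -/
def bell1 : Fin 2 × Fin 2 → ℂ := fun p =>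
  if p = ((0 : Fin 2), (0 : Fin 2)) then ((1 / Real.sqrt 2 : ℝ) : ℂ)
  else if p = (1, 1) then ((1 / Real.sqrt 2 : ℝ) : ℂ) else 0

/-- outer product `|v⟩⟨w|` -/
def outer {n : Type*} (v w : n → ℂ) : Matrix n n ℂ :=
  Matrix.of fun i j => v i * conj (w j)

set_option maxHeartbeats 1000000 in
/-- **the PEPS map is a coisometry whose support is the complement of `|η₁⟩`.**
`P·Pᴴ = 1₃` and `Pᴴ·P = 1₄ − |η₁⟩⟨η₁|`. -/
theorem statement16 :
    P * Pᴴ = 1 ∧ Pᴴ * P = 1 - outer bell1 bell1 := by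

  have h2 : ((Real.sqrt 2 : ℝ) : ℂ) * ((Real.sqrt 2 : ℝ) : ℂ) = 2 := by
    rw [← Complex.ofReal_mul, Real.mul_self_sqrt (by norm_num)]
    norm_num
  constructor
  · ext l m
    fin_cases l <;> fin_cases m <;>
      simp [Matrix.mul_apply, Fintype.sum_prod_type, Fin.sum_univ_succ, P, A, X, Z,
        Matrix.conjTranspose_apply, Matrix.one_apply] <;>
      field_simp <;> first
        | linear_combination h2
        | linear_combination (-1:ℂ)*h2
        | linear_combination (2:ℂ)*h2
        | linear_combination (-2:ℂ)*h2
  · ext p q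
    obtain ⟨i, j⟩ := p; obtain ⟨k, l⟩ := q
    fin_cases i <;> fin_cases j <;> fin_cases k <;> fin_cases l <;>
      simp [Matrix.mul_apply, Fin.sum_univ_three, P, A, X, Z, bell1, outer,
        Matrix.conjTranspose_apply, Matrix.one_apply, Prod.ext_iff] <;>
      field_simp <;> first
        | linear_combination h2
        | linear_combination (-1:ℂ)*h2
        | linear_combination (2:ℂ)*h2
        | linear_combination (-2:ℂ)*h2


end
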